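/- Let $T$ be a compact rooted $\mathbb{R}$-tree and $m$ a decreasing, left-continuous, nonnegative function on $T$ with $m(x) \ge m(x^+)$ for all $x \in T$. Then there exists a unique Borel measure $\mu$ on $T$ such that $\mu(T_x) = m(x)$ for all $x \in T$. -/

import Mathlib

/-!
The measure is obtained by Carathéodory's method from the premeasure `m x - ∑_{c ∈ C} m c` of
the pre-balls `B(x, C) = T_x \ ⋃_{c ∈ C} T_c`.

Applying `m(x) ≥ m(x⁺)` at the highest branch point of a finite antichain `C` above `x` and
inducting on `#C` gives `∑_{c ∈ C} m c ≤ m x`. Hence on every finite set of points `m` is the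
subtree function of a nonnegative discrete measure, so finitely many pre-balls covering `T_x`
have total premeasure at least `m x`. By left continuity each pre-ball lies, at arbitrarily small
extra cost, in an open set inside a slightly larger pre-ball, and compactness of `T_x` turns
countable covers into finite ones. Cutting a pre-ball along a subtree leaves two pre-balls of
complementary premeasure, so subtrees are Carathéodory measurable. They generate the Borel sets,
because `dist w z = |w| + |z| - 2 |w ⊓ z|` with `|·|` the height, and they form a π-system, which
gives uniqueness.
-/


/-- `φ` is a distance-preserving parametrization of a segment from `x` to `y`. -/
def IsSegmentMap {T : Type*} [MetricSpace T] (x y : T)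
    (φ : Set.Icc (0 : ℝ) (dist x y) → T) : Prop :=
  (∀ a b, dist (φ a) (φ b) = |a.1 - b.1|) ∧
    φ ⟨0, Set.mem_Icc.mpr ⟨le_rfl, dist_nonneg⟩⟩ = x ∧
    φ ⟨dist x y, Set.mem_Icc.mpr ⟨dist_nonneg, le_rfl⟩⟩ = y

/-- A metric space is an `ℝ`-tree. -/
def IsRTree (T : Type*) [MetricSpace T] : Prop :=
  (∀ x y : T, ∃! φ : Set.Icc (0 : ℝ) (dist x y) → T, IsSegmentMap x y φ) ∧
  (∀ c : Set.Icc (0 : ℝ) 1 → T, Continuous c → Function.Injective c →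
    ∀ φ, IsSegmentMap (c ⟨0, Set.mem_Icc.mpr ⟨le_rfl, zero_le_one⟩⟩)
        (c ⟨1, Set.mem_Icc.mpr ⟨zero_le_one, le_rfl⟩⟩) φ →
      Set.range c = Set.range φ)

/-- The tree partial order rooted at `ρ`: `x ≤ y` iff `x` lies on the geodesic
segment from `ρ` to `y`. -/
def treeLE {T : Type*} [MetricSpace T] (ρ x y : T) : Prop :=
  dist ρ x + dist x y = dist ρ y

/-- The subtree `T_x = {w : x ≤ w}` above `x`. -/
def subtreeAt {T : Type*} [MetricSpace T] (ρ x : T) : Set T :=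
  {w | treeLE ρ x w}

/-- The collection of pre-balls `B(x, C) = T_x \ ⋃_{y ∈ C} T_y`, where `C`
is a finite pre-cutset of `T_x` (all elements `≥ x`, pairwise incomparable). -/
def preBalls {T : Type*} [MetricSpace T] (ρ : T) : Set (Set T) :=
  {B | ∃ (x : T) (C : Finset T),
    (∀ y ∈ C, treeLE ρ x y) ∧
    (∀ y ∈ C, ∀ z ∈ C, y ≠ z → ¬ treeLE ρ y z) ∧
    B = subtreeAt ρ x \ ⋃ y ∈ C, subtreeAt ρ y}


open Set

section Order

variable {T : Type*} [MetricSpace T] {ρ x y z : T}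

theorem treeLE_refl (ρ x : T) : treeLE ρ x x := by simp [treeLE]

theorem treeLE_root (ρ x : T) : treeLE ρ ρ x := by simp [treeLE]

theorem treeLE.dist_eq (h : treeLE ρ x y) : dist x y = dist ρ y - dist ρ x := by
  unfold treeLE at h; linarith

theorem treeLE.dist_root_le (h : treeLE ρ x y) : dist ρ x ≤ dist ρ y := by
  linarith [h.dist_eq, dist_nonneg (x := x) (y := y)]

theorem treeLE.eq_of_dist_root_le (h : treeLE ρ x y) (h' : dist ρ y ≤ dist ρ x) : x = y :=
  dist_le_zero.1 (by linarith [h.dist_eq])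

theorem treeLE.antisymm (h : treeLE ρ x y) (h' : treeLE ρ y x) : x = y :=
  h.eq_of_dist_root_le h'.dist_root_le

theorem treeLE.trans (h : treeLE ρ x y) (h' : treeLE ρ y z) : treeLE ρ x z := by
  unfold treeLE at *
  linarith [dist_triangle ρ x z, dist_triangle x y z, dist_triangle ρ z y, dist_comm z y]

@[simp]
theorem mem_subtreeAt : y ∈ subtreeAt ρ x ↔ treeLE ρ x y := Iff.rfl

theorem subtreeAt_root : subtreeAt ρ ρ = univ :=
  eq_univ_of_forall (treeLE_root ρ)

theorem isClosed_subtreeAt (ρ x : T) : IsClosed (subtreeAt ρ x) :=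
  isClosed_eq (continuous_const.add (continuous_const.dist continuous_id))
    (continuous_const.dist continuous_id)

end Order

theorem injOn_concat {β : Type*} {f g : ℝ → β} {a b : ℝ} (hfi : InjOn f (Icc 0 a))
    (hgi : InjOn g (Icc 0 b)) (hmeet : ∀ s ∈ Icc 0 a, ∀ t ∈ Icc 0 b, f s = g t → t = 0) :
    InjOn (fun t => if t ≤ a then f t else g (t - a)) (Icc 0 (a + b)) := by
  have hmixed : ∀ s ∈ Icc 0 (a + b), ∀ t ∈ Icc 0 (a + b), s ≤ a → ¬ t ≤ a →
      f s ≠ g (t - a) := fun s hs t ht hsa hta hst =>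
    hta (by linarith [hmeet s ⟨hs.1, hsa⟩ (t - a) ⟨by linarith, by linarith [ht.2]⟩ hst])
  intro s hs t ht hst
  by_cases hsa : s ≤ a <;> by_cases hta : t ≤ a <;> simp only [hsa, hta, if_true, if_false] at hst
  · exact hfi ⟨hs.1, hsa⟩ ⟨ht.1, hta⟩ hst
  · exact absurd hst (hmixed s hs t ht hsa hta)
  · exact absurd hst.symm (hmixed t ht s hs hta hsa)
  · linarith [hgi ⟨by linarith, by linarith [hs.2]⟩ ⟨by linarith, by linarith [ht.2]⟩ hst]

section Geodesic

variable {T : Type*} [MetricSpace T] {ρ x y : T} {s t : ℝ}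

theorem IsSegmentMap.dist_left {φ : Icc (0 : ℝ) (dist x y) → T} (hφ : IsSegmentMap x y φ)
    (t : Icc (0 : ℝ) (dist x y)) : dist x (φ t) = t := by
  have h := hφ.1 ⟨0, le_rfl, dist_nonneg⟩ t
  rw [hφ.2.1] at h
  simp [h, abs_of_nonneg t.2.1]

theorem IsSegmentMap.treeLE_apply {φ : Icc (0 : ℝ) (dist x y) → T} (hφ : IsSegmentMap x y φ)
    (t : Icc (0 : ℝ) (dist x y)) : treeLE x (φ t) y := by
  have h := hφ.1 t ⟨dist x y, dist_nonneg, le_rfl⟩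
  rw [hφ.2.2, abs_of_nonpos (by simpa using t.2.2)] at h
  simp only [treeLE, hφ.dist_left, h]; ring

/-- The geodesic from `x` to `y`, parametrised by arc length and extended constantly
outside `[0, dist x y]`. -/
noncomputable def geodesic (hT : IsRTree T) (x y : T) : ℝ → T :=
  IccExtend dist_nonneg (hT.1 x y).exists.choose

theorem continuous_geodesic (hT : IsRTree T) : Continuous (geodesic hT x y) :=
  continuous_IccExtend_iff.2
    (Isometry.of_dist_eq fun a b => (hT.1 x y).exists.choose_spec.1 a b).continuous

theorem geodesic_zero (hT : IsRTree T) : geodesic hT x y 0 = x := by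
  rw [geodesic, IccExtend_left]; exact (hT.1 x y).exists.choose_spec.2.1

theorem geodesic_dist (hT : IsRTree T) : geodesic hT x y (dist x y) = y := by
  rw [geodesic, IccExtend_right]; exact (hT.1 x y).exists.choose_spec.2.2

theorem dist_geodesic (hT : IsRTree T) (hs : s ∈ Icc 0 (dist x y)) (ht : t ∈ Icc 0 (dist x y)) :
    dist (geodesic hT x y s) (geodesic hT x y t) = |s - t| := by
  simpa [geodesic, IccExtend_of_mem _ _ hs, IccExtend_of_mem _ _ ht] using
    (hT.1 x y).exists.choose_spec.1 ⟨s, hs⟩ ⟨t, ht⟩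

theorem dist_geodesic_left (hT : IsRTree T) (ht : t ∈ Icc 0 (dist x y)) :
    dist x (geodesic hT x y t) = t := by
  simpa [geodesic_zero, abs_of_nonneg ht.1] using
    dist_geodesic hT (left_mem_Icc.2 dist_nonneg) ht

theorem dist_geodesic_right (hT : IsRTree T) (ht : t ∈ Icc 0 (dist x y)) :
    dist (geodesic hT x y t) y = dist x y - t := by
  have h := dist_geodesic hT ht (right_mem_Icc.2 dist_nonneg)
  rwa [geodesic_dist, abs_of_nonpos (by linarith [ht.2]), neg_sub] at h

theorem treeLE_geodesic (hT : IsRTree T) (ht : t ∈ Icc 0 (dist x y)) :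
    treeLE x (geodesic hT x y t) y := by
  rw [treeLE, dist_geodesic_left hT ht, dist_geodesic_right hT ht]; ring

theorem treeLE_geodesic_geodesic (hT : IsRTree T) (hs : 0 ≤ s) (hst : s ≤ t)
    (ht : t ≤ dist ρ y) : treeLE ρ (geodesic hT ρ y s) (geodesic hT ρ y t) := by
  have hs' : s ∈ Icc 0 (dist ρ y) := ⟨hs, hst.trans ht⟩
  have ht' : t ∈ Icc 0 (dist ρ y) := ⟨hs.trans hst, ht⟩
  rw [treeLE, dist_geodesic_left hT hs', dist_geodesic_left hT ht', dist_geodesic hT hs' ht',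
    abs_of_nonpos (by linarith)]
  ring

/-- The concatenation of the two arcs is an arc, hence a geodesic by the `ℝ`-tree axiom. -/
theorem IsRTree.treeLE_junction (hT : IsRTree T) {f g : ℝ → T} {a b : ℝ} (ha : 0 ≤ a)
    (hb : 0 ≤ b) (hf : Continuous f) (hg : Continuous g) (hfi : InjOn f (Icc 0 a))
    (hgi : InjOn g (Icc 0 b)) (hfg : f a = g 0)
    (hmeet : ∀ s ∈ Icc 0 a, ∀ t ∈ Icc 0 b, f s = g t → t = 0) :
    treeLE (f 0) (f a) (g b) := by
  rcases ha.eq_or_lt with rfl | ha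
  · exact treeLE_root _ _
  rcases hb.eq_or_lt with rfl | hb
  · rw [hfg]; exact treeLE_refl _ _
  set F : ℝ → T := fun t => if t ≤ a then f t else g (t - a) with hF
  have hFc : Continuous F :=
    Continuous.if_le hf (hg.comp (continuous_id.sub continuous_const)) continuous_id
      continuous_const fun t ht => by simp [ht, hfg]
  set c : Icc (0 : ℝ) 1 → T := fun u => F ((a + b) * u) with hc
  have hcc : Continuous c := hFc.comp (continuous_const.mul continuous_subtype_val)
  have hci : Function.Injective c := fun u v huv => Subtype.ext <|
    mul_left_cancel₀ (by linarith) <| injOn_concat hfi hgi hmeet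
      ⟨by nlinarith [u.2.1], by nlinarith [u.2.2]⟩ ⟨by nlinarith [v.2.1], by nlinarith [v.2.2]⟩ huv
  have hc0 : c ⟨0, le_rfl, zero_le_one⟩ = f 0 := by simp [hc, hF, ha.le]
  have hc1 : c ⟨1, zero_le_one, le_rfl⟩ = g b := by simp [hc, hF, hb]
  obtain ⟨φ, hφ⟩ := (hT.1 (c ⟨0, le_rfl, zero_le_one⟩) (c ⟨1, zero_le_one, le_rfl⟩)).exists
  have hjunction : f a ∈ range c :=
    ⟨⟨a / (a + b), div_nonneg ha.le (by linarith), (div_le_one (by linarith)).2 (by linarith)⟩,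
      by simp [hc, hF, mul_div_cancel₀ a (by linarith : a + b ≠ 0)]⟩
  rw [hT.2 c hcc hci φ hφ] at hjunction
  obtain ⟨τ, hτ⟩ := hjunction
  rw [← hc0, ← hc1, ← hτ]
  exact hφ.treeLE_apply τ

end Geodesic

section Meet

variable {T : Type*} [MetricSpace T] {ρ a u v x z : T}

/-- Take the largest `s` at which the geodesics from the root to `u` and `v` agree: beyond it they
are disjoint, so `treeLE_junction` applies to them. -/
theorem IsRTree.exists_branch (hT : IsRTree T) (ρ u v : T) :
    ∃ s ∈ Icc 0 (dist ρ u), s ≤ dist ρ v ∧ geodesic hT ρ u s = geodesic hT ρ v s ∧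
      treeLE u (geodesic hT ρ u s) v := by
  set f := geodesic hT ρ u
  set g := geodesic hT ρ v
  set A := Icc 0 (min (dist ρ u) (dist ρ v)) ∩ {t | f t = g t}
  have hA : IsClosed A :=
    isClosed_Icc.inter (isClosed_eq (continuous_geodesic hT) (continuous_geodesic hT))
  have h0 : (0 : ℝ) ∈ A :=
    ⟨left_mem_Icc.2 (le_min dist_nonneg dist_nonneg), by simp [f, g, geodesic_zero]⟩
  have hbdd : BddAbove A := bddAbove_Icc.mono inter_subset_left
  obtain ⟨⟨hs0, hsmin⟩, hfg⟩ := hA.csSup_mem ⟨0, h0⟩ hbdd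
  set s := sSup A
  have hsu : s ≤ dist ρ u := hsmin.trans (min_le_left _ _)
  have hsv : s ≤ dist ρ v := hsmin.trans (min_le_right _ _)
  refine ⟨s, ⟨hs0, hsu⟩, hsv, hfg, ?_⟩
  have hF : ∀ t ∈ Icc 0 (dist ρ u - s), dist ρ (f (dist ρ u - t)) = dist ρ u - t := fun t ht =>
    dist_geodesic_left hT ⟨by linarith [ht.2], by linarith [ht.1]⟩
  have hG : ∀ t ∈ Icc 0 (dist ρ v - s), dist ρ (g (s + t)) = s + t := fun t ht =>
    dist_geodesic_left hT ⟨by linarith [ht.1], by linarith [ht.2]⟩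
  have hjunction := hT.treeLE_junction (f := fun t => f (dist ρ u - t)) (g := fun t => g (s + t))
    (a := dist ρ u - s) (b := dist ρ v - s) (by linarith) (by linarith)
    ((continuous_geodesic hT).comp (continuous_const.sub continuous_id))
    ((continuous_geodesic hT).comp (continuous_const.add continuous_id))
    (fun t₁ ht₁ t₂ ht₂ h => by linarith [hF t₁ ht₁, hF t₂ ht₂, congrArg (dist ρ) h])
    (fun t₁ ht₁ t₂ ht₂ h => by linarith [hG t₁ ht₁, hG t₂ ht₂, congrArg (dist ρ) h])
    (by simp only [sub_sub_cancel, add_zero]; exact hfg)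
    (fun t₁ ht₁ t₂ ht₂ h => by
      -- the common point of the two arcs is at height `s + t₂` on both geodesics
      have hr : dist ρ u - t₁ = s + t₂ := by linarith [hF t₁ ht₁, hG t₂ ht₂, congrArg (dist ρ) h]
      have hmem : s + t₂ ∈ A := ⟨⟨by linarith [ht₂.1], le_min (by linarith [ht₁.1])
        (by linarith [ht₂.2])⟩, by show f _ = g _; rw [← h, hr]⟩
      linarith [ht₂.1, le_csSup hbdd hmem])
  simpa [f, g, geodesic_dist] using hjunction

theorem treeLE.geodesic_dist_root (hT : IsRTree T) (h : treeLE ρ u z) :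
    geodesic hT ρ z (dist ρ u) = u := by
  obtain ⟨s, ⟨hs0, hsu⟩, hsz, hgeo, hbetween⟩ := hT.exists_branch ρ u z
  have hu := dist_geodesic_right hT ⟨hs0, hsu⟩
  have hz := dist_geodesic_right hT ⟨hs0, hsz⟩
  unfold treeLE at hbetween
  rw [dist_comm, hu, hgeo, hz, h.dist_eq] at hbetween
  -- as `u` lies between the root and `z`, the geodesics to `u` and `z` branch only at `u`
  have hs : s = dist ρ u := by linarith
  rw [← hs, ← hgeo, hs, geodesic_dist]

theorem IsRTree.total_of_treeLE (hT : IsRTree T) (hu : treeLE ρ u z) (hv : treeLE ρ v z) :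
    treeLE ρ u v ∨ treeLE ρ v u := by
  rw [← hu.geodesic_dist_root hT, ← hv.geodesic_dist_root hT]
  rcases le_total (dist ρ u) (dist ρ v) with h | h
  · exact .inl (treeLE_geodesic_geodesic hT dist_nonneg h hv.dist_root_le)
  · exact .inr (treeLE_geodesic_geodesic hT dist_nonneg h hu.dist_root_le)

/-- The meet `u ⊓ v` of the tree order: the end of the common part of the geodesics from the
root to `u` and to `v`. -/
noncomputable def treeMeet (hT : IsRTree T) (ρ u v : T) : T :=
  geodesic hT ρ u (hT.exists_branch ρ u v).choose

theorem treeMeet_spec (hT : IsRTree T) (ρ u v : T) :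
    treeLE ρ (treeMeet hT ρ u v) u ∧ treeLE ρ (treeMeet hT ρ u v) v ∧
      treeLE u (treeMeet hT ρ u v) v := by
  obtain ⟨⟨hs0, hsu⟩, hsv, hgeo, hbetween⟩ := (hT.exists_branch ρ u v).choose_spec
  refine ⟨?_, ?_, hbetween⟩
  · exact treeLE_geodesic hT ⟨hs0, hsu⟩
  · rw [treeMeet, hgeo]
    exact treeLE_geodesic hT ⟨hs0, hsv⟩

theorem treeMeet_le_left (hT : IsRTree T) (ρ u v : T) : treeLE ρ (treeMeet hT ρ u v) u :=
  (treeMeet_spec hT ρ u v).1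

theorem treeMeet_le_right (hT : IsRTree T) (ρ u v : T) : treeLE ρ (treeMeet hT ρ u v) v :=
  (treeMeet_spec hT ρ u v).2.1

theorem dist_eq_dist_treeMeet_add (hT : IsRTree T) (ρ u v : T) :
    dist u v = dist u (treeMeet hT ρ u v) + dist (treeMeet hT ρ u v) v :=
  (treeMeet_spec hT ρ u v).2.2.symm

theorem dist_root_treeMeet (hT : IsRTree T) (ρ u v : T) :
    dist ρ (treeMeet hT ρ u v) = (dist ρ u + dist ρ v - dist u v) / 2 := by
  have hu := (treeMeet_le_left hT ρ u v).dist_eq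
  have hv := (treeMeet_le_right hT ρ u v).dist_eq
  rw [dist_eq_dist_treeMeet_add hT ρ u v, dist_comm u, hu, hv]
  ring

theorem treeLE_treeMeet (hT : IsRTree T) (hu : treeLE ρ a u) (hv : treeLE ρ a v) :
    treeLE ρ a (treeMeet hT ρ u v) := by
  have hheight : dist ρ a ≤ dist ρ (treeMeet hT ρ u v) := by
    rw [dist_root_treeMeet]
    linarith [dist_triangle u a v, dist_comm u a, hu.dist_eq, hv.dist_eq]
  rcases hT.total_of_treeLE hu (treeMeet_le_left hT ρ u v) with h | h
  · exact h
  · rw [h.eq_of_dist_root_le hheight]; exact treeLE_refl _ _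

theorem isOpen_subtreeAt_diff_singleton (hT : IsRTree T) (ρ x : T) :
    IsOpen (subtreeAt ρ x \ {x}) := by
  refine Metric.isOpen_iff.2 fun z ⟨hxz, hzx⟩ => ⟨dist x z, dist_pos.2 (Ne.symm hzx), ?_⟩
  intro z' hz'
  rw [Metric.mem_ball] at hz'
  set w := treeMeet hT ρ z z'
  have hw : dist ρ x < dist ρ w := by
    rw [dist_root_treeMeet]
    linarith [treeLE.dist_eq hxz, dist_triangle ρ z' z, dist_comm z z']
  rcases hT.total_of_treeLE hxz (treeMeet_le_left hT ρ z z') with h | h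
  · refine ⟨h.trans (treeMeet_le_right hT ρ z z'), fun hz'x => ?_⟩
    have hwz' : dist ρ w ≤ dist ρ z' := (treeMeet_le_right hT ρ z z').dist_root_le
    rw [mem_singleton_iff.1 hz'x] at hwz'
    linarith
  · linarith [h.dist_root_le]

end Meet

section Borel

open MeasureTheory MeasurableSpace

variable {T : Type*} [MetricSpace T] {ρ x : T}

theorem isPiSystem_range_subtreeAt (hT : IsRTree T) (ρ : T) :
    IsPiSystem (range (subtreeAt ρ)) := by
  rintro _ ⟨x, rfl⟩ _ ⟨y, rfl⟩ ⟨z, hxz, hyz⟩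
  rcases hT.total_of_treeLE hxz hyz with h | h
  · exact ⟨y, (inter_eq_right.2 fun _ hw => h.trans hw).symm⟩
  · exact ⟨x, (inter_eq_left.2 fun _ hw => h.trans hw).symm⟩

variable [MeasurableSpace T]

/-- `{z | s ≤ |w ⊓ z|}` is the subtree above the point of height `s` on the geodesic to `w`. -/
theorem measurable_dist_root_treeMeet (hT : IsRTree T)
    (hsub : ∀ x, MeasurableSet (subtreeAt ρ x)) (w : T) :
    Measurable fun z => dist ρ (treeMeet hT ρ w z) := by
  refine measurable_of_Ici fun s => ?_
  by_cases hs : s ≤ dist ρ w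
  · set a := geodesic hT ρ w (max s 0)
    have hmem : max s 0 ∈ Icc 0 (dist ρ w) := ⟨le_max_right _ _, max_le hs dist_nonneg⟩
    have haw : treeLE ρ a w := treeLE_geodesic hT hmem
    have ha : dist ρ a = max s 0 := dist_geodesic_left hT hmem
    convert hsub a using 1
    ext z
    simp only [mem_preimage, mem_Ici]
    constructor
    · intro hz
      rcases hT.total_of_treeLE haw (treeMeet_le_left hT ρ w z) with h | h
      · exact h.trans (treeMeet_le_right hT ρ w z)
      · rw [← h.eq_of_dist_root_le (by rw [ha]; exact max_le hz dist_nonneg)]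
        exact treeMeet_le_right hT ρ w z
    · intro hz
      exact (le_max_left s 0).trans (ha ▸ (treeLE_treeMeet hT haw hz).dist_root_le)
  · convert MeasurableSet.empty
    refine eq_empty_of_forall_notMem fun z hz => hs ?_
    exact le_trans hz (treeMeet_le_left hT ρ w z).dist_root_le

/-- `|z|` is the supremum of `|w ⊓ z|` over `w` in a countable dense set. -/
theorem measurable_dist_root [CompactSpace T] (hT : IsRTree T)
    (hsub : ∀ x, MeasurableSet (subtreeAt ρ x)) : Measurable fun z : T => dist ρ z := by
  obtain ⟨D, hDc, hD⟩ := TopologicalSpace.exists_countable_dense T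
  refine measurable_of_Ioi fun s => ?_
  have : (fun z => dist ρ z) ⁻¹' Ioi s =
      ⋃ w ∈ D, (fun z => dist ρ (treeMeet hT ρ w z)) ⁻¹' Ioi s := by
    ext z
    simp only [mem_preimage, mem_Ioi, mem_iUnion, exists_prop]
    constructor
    · intro hz
      obtain ⟨w, hwz, hwD⟩ := Metric.dense_iff.1 hD z (dist ρ z - s) (by linarith)
      refine ⟨w, hwD, ?_⟩
      rw [dist_root_treeMeet]
      linarith [Metric.mem_ball.1 hwz, dist_triangle ρ w z, dist_comm w z, dist_comm ρ w]
    · rintro ⟨w, -, hw⟩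
      exact hw.trans_le (treeMeet_le_right hT ρ w z).dist_root_le
  rw [this]
  exact MeasurableSet.biUnion hDc fun w _ =>
    measurable_dist_root_treeMeet hT hsub w measurableSet_Ioi

theorem measurable_dist_left [CompactSpace T] (hT : IsRTree T)
    (hsub : ∀ x, MeasurableSet (subtreeAt ρ x)) (w : T) : Measurable fun z => dist w z := by
  have h : (fun z => dist w z) =
      fun z => dist ρ w + dist ρ z - 2 * dist ρ (treeMeet hT ρ w z) := by
    ext z; rw [dist_root_treeMeet]; ring
  rw [h]
  exact (measurable_const.add (measurable_dist_root hT hsub)).sub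
    ((measurable_dist_root_treeMeet hT hsub w).const_mul 2)

theorem opensMeasurableSpace_of_measurableSet_subtreeAt [CompactSpace T] (hT : IsRTree T)
    (hsub : ∀ x, MeasurableSet (subtreeAt ρ x)) : OpensMeasurableSpace T := by
  refine opensMeasurableSpace_iff_forall_measurableSet.2 fun U hU => ?_
  set S := {B | ∃ w r, B = Metric.ball w r ∧ B ⊆ U}
  obtain ⟨S', hS'c, hS'S, hS'⟩ := TopologicalSpace.isOpen_sUnion_countable S
    (fun B ⟨w, r, hB, _⟩ => hB ▸ Metric.isOpen_ball)
  have hU' : U = ⋃₀ S' := by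
    rw [hS']
    refine Subset.antisymm (fun z hz => ?_) (sUnion_subset fun B ⟨_, _, _, hBU⟩ => hBU)
    obtain ⟨ε, hε, hball⟩ := Metric.isOpen_iff.1 hU z hz
    exact ⟨_, ⟨z, ε, rfl, hball⟩, Metric.mem_ball_self hε⟩
  rw [hU']
  refine MeasurableSet.sUnion hS'c fun B hB => ?_
  obtain ⟨w, r, rfl, -⟩ := hS'S hB
  have : Metric.ball w r = (fun z => dist w z) ⁻¹' Iio r := by ext z; simp [dist_comm]
  rw [this]
  exact measurable_dist_left hT hsub w measurableSet_Iio

theorem generateFrom_range_subtreeAt [CompactSpace T] [BorelSpace T] (hT : IsRTree T) (ρ : T) :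
    generateFrom (range (subtreeAt ρ)) = ‹MeasurableSpace T› := by
  refine le_antisymm (generateFrom_le ?_) ?_
  · rintro _ ⟨x, rfl⟩
    exact (isClosed_subtreeAt ρ x).measurableSet
  · rw [BorelSpace.measurable_eq (α := T)]
    exact (@opensMeasurableSpace_of_measurableSet_subtreeAt T _ ρ
      (generateFrom (range (subtreeAt ρ))) _ hT
      fun x => measurableSet_generateFrom (mem_range_self x)).borel_le

theorem ext_of_subtreeAt [CompactSpace T] [BorelSpace T] (hT : IsRTree T) (ρ : T)
    {μ ν : Measure T} [IsFiniteMeasure μ] (h : ∀ x, μ (subtreeAt ρ x) = ν (subtreeAt ρ x)) :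
    μ = ν :=
  ext_of_generate_finite _ (generateFrom_range_subtreeAt hT ρ).symm
    (isPiSystem_range_subtreeAt hT ρ) (forall_mem_range.2 h)
    (by rw [← subtreeAt_root (ρ := ρ)]; exact h ρ)

end Borel

section Antichain

variable {T : Type*} [MetricSpace T] {ρ w x : T} {m : T → ℝ} {C : Finset T}

def IsPreCutset (ρ x : T) (C : Finset T) : Prop :=
  (∀ c ∈ C, treeLE ρ x c) ∧ IsAntichain (treeLE ρ) (C : Set T)

def preBall (ρ x : T) (C : Finset T) : Set T :=
  subtreeAt ρ x \ ⋃ c ∈ C, subtreeAt ρ c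

def SumLeOnAntichains (ρ : T) (m : T → ℝ) : Prop :=
  ∀ x C, IsPreCutset ρ x C → ∑ c ∈ C, m c ≤ m x

/-- The hypothesis `m(x⁺) ≤ m(x)`: `C` picks points in distinct branches at `x`, and the `sSup`
is the right limit of `m` at `x` along the branch through `y`. -/
def RightLimitLe (ρ : T) (m : T → ℝ) : Prop :=
  ∀ (x : T) (C : Finset T), (∀ y ∈ C, treeLE ρ x y ∧ y ≠ x) →
    (∀ y ∈ C, ∀ z ∈ C, y ≠ z → dist y z = dist y x + dist x z) →
    ∑ y ∈ C, sSup (m '' {z | treeLE ρ x z ∧ treeLE ρ z y ∧ z ≠ x}) ≤ m x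

theorem isPreCutset_empty (ρ x : T) : IsPreCutset ρ x ∅ := ⟨by simp, by simp⟩

open scoped Classical in
theorem IsPreCutset.filter (hC : IsPreCutset ρ x C) (y : T) :
    IsPreCutset ρ y (C.filter (treeLE ρ y)) :=
  ⟨fun _ hc => (Finset.mem_filter.1 hc).2,
    hC.2.subset (Finset.coe_subset.2 (Finset.filter_subset _ _))⟩

open scoped Classical in
theorem IsPreCutset.insert_filter_not (hC : IsPreCutset ρ x C) (hxw : treeLE ρ x w)
    (hw : ∀ c ∈ C, ¬ treeLE ρ w c → ¬ treeLE ρ c w) :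
    IsPreCutset ρ x (insert w (C.filter fun c => ¬ treeLE ρ w c)) := by
  refine ⟨?_, ?_⟩
  · simp only [Finset.forall_mem_insert, Finset.mem_filter]
    exact ⟨hxw, fun c hc => hC.1 c hc.1⟩
  · rw [Finset.coe_insert, Finset.coe_filter]
    exact (hC.2.subset fun c hc => hc.1).insert (fun c hc _ => hw c hc.1 hc.2)
      fun c hc _ hwc => hc.2 hwc

theorem SumLeOnAntichains.antitone (hm : SumLeOnAntichains ρ m) (h : treeLE ρ x y) :
    m y ≤ m x := by
  simpa using hm x {y} ⟨by simpa using h, by simp⟩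

theorem SumLeOnAntichains.sub_sum_nonneg (hm : SumLeOnAntichains ρ m) (hC : IsPreCutset ρ x C) :
    0 ≤ m x - ∑ c ∈ C, m c :=
  sub_nonneg.2 (hm x C hC)

theorem sum_le_of_forall_dist_eq (hdec : ∀ x y, treeLE ρ x y → m y ≤ m x)
    (hplus : RightLimitLe ρ m)
    (hC : ∀ c ∈ C, treeLE ρ w c ∧ c ≠ w)
    (hdist : ∀ c ∈ C, ∀ c' ∈ C, c ≠ c' → dist c c' = dist c w + dist w c') :
    ∑ c ∈ C, m c ≤ m w := by
  refine (Finset.sum_le_sum fun c hc => le_csSup ?_ ?_).trans (hplus w C hC hdist)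
  · exact ⟨m w, by rintro _ ⟨z, hz, rfl⟩; exact hdec w z hz.1⟩
  · exact ⟨c, ⟨(hC c hc).1, treeLE_refl ρ c, (hC c hc).2⟩, rfl⟩

/-- Among the pairwise meets of `C`, a highest one `w` separates the elements of `C` above it. -/
theorem IsRTree.exists_separating_treeMeet (hT : IsRTree T)
    (hC : IsAntichain (treeLE ρ) (C : Set T)) (h1 : 1 < C.card) :
    ∃ c₀ ∈ C, ∃ c₁ ∈ C, c₀ ≠ c₁ ∧
      (∀ c ∈ C, treeLE ρ (treeMeet hT ρ c₀ c₁) c → c ≠ treeMeet hT ρ c₀ c₁) ∧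
      ∀ c ∈ C, ∀ c' ∈ C, c ≠ c' → treeLE ρ (treeMeet hT ρ c₀ c₁) c →
        treeLE ρ (treeMeet hT ρ c₀ c₁) c' →
          dist c c' = dist c (treeMeet hT ρ c₀ c₁) + dist (treeMeet hT ρ c₀ c₁) c' := by
  obtain ⟨a, ha, b, hb, hab⟩ := Finset.one_lt_card.1 h1
  obtain ⟨p, hp, hmax⟩ := C.offDiag.exists_max_image (fun p => dist ρ (treeMeet hT ρ p.1 p.2))
    ⟨(a, b), Finset.mem_offDiag.2 ⟨ha, hb, hab⟩⟩
  obtain ⟨hp₁, hp₂, hne⟩ := Finset.mem_offDiag.1 hp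
  have hw₁ := treeMeet_le_left hT ρ p.1 p.2
  have hw₂ := treeMeet_le_right hT ρ p.1 p.2
  refine ⟨p.1, hp₁, p.2, hp₂, hne, fun c hc hwc hcw => hne ?_, fun c hc c' hc' hcc' hwc hwc' => ?_⟩
  · rw [← hC.eq hc hp₁ (hcw ▸ hw₁), ← hC.eq hc hp₂ (hcw ▸ hw₂)]
  · have hle := treeLE_treeMeet hT hwc hwc'
    rw [hle.eq_of_dist_root_le (hmax (c, c') (Finset.mem_offDiag.2 ⟨hc, hc', hcc'⟩))]
    exact dist_eq_dist_treeMeet_add hT ρ c c'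

/-- The elements of `C` above the highest pairwise meet `w` lie in distinct branches at `w`, so
they may be replaced by `w`. -/
theorem IsRTree.exists_isPreCutset_card_lt (hT : IsRTree T)
    (hdec : ∀ x y, treeLE ρ x y → m y ≤ m x) (hplus : RightLimitLe ρ m)
    (hC : IsPreCutset ρ x C) (h1 : 1 < C.card) :
    ∃ C', IsPreCutset ρ x C' ∧ C'.card < C.card ∧ ∑ c ∈ C, m c ≤ ∑ c ∈ C', m c := by
  classical
  obtain ⟨c₀, hc₀, c₁, hc₁, hne, hwC, hsep⟩ := hT.exists_separating_treeMeet hC.2 h1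
  set w := treeMeet hT ρ c₀ c₁
  have hw₀ := treeMeet_le_left hT ρ c₀ c₁
  have hw₁ := treeMeet_le_right hT ρ c₀ c₁
  set Cw := C.filter (treeLE ρ w)
  set Cn := C.filter fun c => ¬ treeLE ρ w c
  have hCw : ∑ c ∈ Cw, m c ≤ m w := by
    refine sum_le_of_forall_dist_eq hdec hplus (fun c hc => ?_) fun c hc c' hc' hcc' => ?_
    · obtain ⟨hc, hwc⟩ := Finset.mem_filter.1 hc
      exact ⟨hwc, hwC c hc hwc⟩
    · obtain ⟨hc, hwc⟩ := Finset.mem_filter.1 hc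
      obtain ⟨hc', hwc'⟩ := Finset.mem_filter.1 hc'
      exact hsep c hc c' hc' hcc' hwc hwc'
  refine ⟨insert w Cn, ?_, ?_, ?_⟩
  · exact hC.insert_filter_not (treeLE_treeMeet hT (hC.1 c₀ hc₀) (hC.1 c₁ hc₁))
      fun c hc hwc hcw => hwc (by rw [hC.2.eq hc hc₀ (hcw.trans hw₀)]; exact hw₀)
  · have h2 : 1 < Cw.card := Finset.one_lt_card.2
      ⟨c₀, Finset.mem_filter.2 ⟨hc₀, hw₀⟩, c₁, Finset.mem_filter.2 ⟨hc₁, hw₁⟩, hne⟩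
    have h3 : Cw.card + Cn.card = C.card := Finset.card_filter_add_card_filter_not _
    have h4 := Finset.card_insert_le w Cn
    omega
  · rw [Finset.sum_insert (by simp [Cn, treeLE_refl]),
      ← Finset.sum_filter_add_sum_filter_not C (treeLE ρ w)]
    linarith

theorem sumLeOnAntichains (hT : IsRTree T) (hnonneg : ∀ x, 0 ≤ m x)
    (hdec : ∀ x y, treeLE ρ x y → m y ≤ m x) (hplus : RightLimitLe ρ m) :
    SumLeOnAntichains ρ m := by
  intro x C hC
  induction hn : C.card using Nat.strong_induction_on generalizing C with
  | _ n ih =>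
  rcases le_or_gt C.card 1 with hC1 | hC1
  · have : Nonempty T := ⟨x⟩
    obtain ⟨a, ha⟩ := Finset.card_le_one_iff_subset_singleton.1 hC1
    rcases Finset.subset_singleton_iff.1 ha with rfl | rfl
    · simpa using hnonneg x
    · simpa using hdec x a (hC.1 a (Finset.mem_singleton_self a))
  obtain ⟨C', hC', hcard, hsum⟩ := hT.exists_isPreCutset_card_lt hdec hplus hC hC1
  exact hsum.trans (ih _ (hn ▸ hcard) C' hC' rfl)

end Antichain

section AtomMass

open scoped Classical

variable {T : Type*} [MetricSpace T] {ρ g x x₀ y : T} {m : T → ℝ} {C G : Finset T}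

/-- The immediate successors of `g` in the finite set `G`. -/
noncomputable def succsIn (ρ : T) (G : Finset T) (g : T) : Finset T :=
  G.filter fun s => treeLE ρ g s ∧ s ≠ g ∧ ∀ h ∈ G, treeLE ρ g h → treeLE ρ h s → h = g ∨ h = s

/-- The weight of the atom at `g` of the discrete measure on `G` whose subtrees `T_y`, `y ∈ G`,
have mass `m y`. -/
noncomputable def atomMass (ρ : T) (m : T → ℝ) (G : Finset T) (g : T) : ℝ :=
  m g - ∑ s ∈ succsIn ρ G g, m s

theorem isPreCutset_succsIn : IsPreCutset ρ g (succsIn ρ G g) := by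
  refine ⟨fun s hs => (Finset.mem_filter.1 hs).2.1, fun s hs s' hs' hne hss' => ?_⟩
  simp only [Finset.coe_filter, succsIn, mem_ofPred_eq] at hs hs'
  obtain ⟨hsG, hgs, hsg, -⟩ := hs
  obtain ⟨-, -, -, hmin⟩ := hs'
  exact (hmin s hsG hgs hss').elim hsg hne

theorem SumLeOnAntichains.atomMass_nonneg (hm : SumLeOnAntichains ρ m) :
    0 ≤ atomMass ρ m G g :=
  hm.sub_sum_nonneg isPreCutset_succsIn

theorem IsRTree.pairwiseDisjoint_succsIn (hT : IsRTree T) :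
    (G : Set T).PairwiseDisjoint (succsIn ρ G) := by
  intro g₁ hg₁ g₂ hg₂ hne
  refine Finset.disjoint_left.2 fun s hs₁ hs₂ => ?_
  simp only [succsIn, Finset.mem_filter] at hs₁ hs₂
  obtain ⟨-, hg₁s, hsg₁, hmin₁⟩ := hs₁
  obtain ⟨-, hg₂s, hsg₂, hmin₂⟩ := hs₂
  rcases hT.total_of_treeLE hg₁s hg₂s with h | h
  · exact (hmin₁ g₂ hg₂ h hg₂s).elim (Ne.symm hne) (Ne.symm hsg₂)
  · exact (hmin₂ g₁ hg₁ h hg₁s).elim hne (Ne.symm hsg₁)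

/-- Each `g' ∈ G` strictly above `y` is an immediate successor of a highest point of `G` in
`[y, g')`. -/
theorem biUnion_succsIn (hy : y ∈ G) :
    (G.filter (treeLE ρ y)).biUnion (succsIn ρ G) = (G.filter (treeLE ρ y)).erase y := by
  ext g'
  simp only [Finset.mem_biUnion, Finset.mem_erase, Finset.mem_filter, succsIn]
  constructor
  · rintro ⟨g, ⟨-, hyg⟩, hg'G, hgg', hg'g, -⟩
    refine ⟨fun hg'y => hg'g ?_, hg'G, hyg.trans hgg'⟩
    subst hg'y
    exact hyg.antisymm hgg'
  · rintro ⟨hg'y, hg'G, hyg'⟩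
    set P := G.filter fun h => treeLE ρ y h ∧ treeLE ρ h g' ∧ h ≠ g'
    obtain ⟨p, hpP, hpmax⟩ := P.exists_max_image (dist ρ)
      ⟨y, Finset.mem_filter.2 ⟨hy, treeLE_refl ρ y, hyg', Ne.symm hg'y⟩⟩
    obtain ⟨hpG, hyp, hpg', hpne⟩ := Finset.mem_filter.1 hpP
    refine ⟨p, ⟨hpG, hyp⟩, hg'G, hpg', Ne.symm hpne, fun h hhG hph hhg' => ?_⟩
    by_cases hh : h = g'
    · exact .inr hh
    · exact .inl (hph.eq_of_dist_root_le
        (hpmax h (Finset.mem_filter.2 ⟨hhG, hyp.trans hph, hhg', hh⟩))).symm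

theorem IsRTree.sum_atomMass_subtreeAt (hT : IsRTree T) (hy : y ∈ G) :
    ∑ g ∈ G.filter (treeLE ρ y), atomMass ρ m G g = m y := by
  have hdisj := (hT.pairwiseDisjoint_succsIn (ρ := ρ) (G := G)).subset
    (Finset.coe_subset.2 (Finset.filter_subset (treeLE ρ y) G))
  simp only [atomMass, Finset.sum_sub_distrib]
  rw [← Finset.sum_biUnion hdisj, biUnion_succsIn hy,
    ← Finset.sum_erase_add _ _ (Finset.mem_filter.2 ⟨hy, treeLE_refl ρ y⟩)]
  ring

theorem IsRTree.sum_atomMass_preBall (hT : IsRTree T) (hx : x ∈ G) (hCG : C ⊆ G)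
    (hC : IsPreCutset ρ x C) :
    ∑ g ∈ G.filter (· ∈ preBall ρ x C), atomMass ρ m G g = m x - ∑ c ∈ C, m c := by
  have hsplit : G.filter (treeLE ρ x) =
      G.filter (· ∈ preBall ρ x C) ∪ C.biUnion fun c => G.filter (treeLE ρ c) := by
    ext g
    simp only [preBall, Finset.mem_union, Finset.mem_filter, Finset.mem_biUnion, mem_sdiff,
      mem_iUnion, mem_subtreeAt, exists_prop]
    constructor
    · rintro ⟨hg, hxg⟩
      by_cases h : ∃ c ∈ C, treeLE ρ c g
      · obtain ⟨c, hc, hcg⟩ := h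
        exact .inr ⟨c, hc, hg, hcg⟩
      · exact .inl ⟨hg, hxg, h⟩
    · rintro (⟨hg, hxg, -⟩ | ⟨c, hc, hg, hcg⟩)
      · exact ⟨hg, hxg⟩
      · exact ⟨hg, (hC.1 c hc).trans hcg⟩
  have hdisj : Disjoint (G.filter (· ∈ preBall ρ x C))
      (C.biUnion fun c => G.filter (treeLE ρ c)) := by
    refine Finset.disjoint_left.2 fun g hg hg' => ?_
    obtain ⟨c, hc, hcg⟩ := Finset.mem_biUnion.1 hg'
    exact (Finset.mem_filter.1 hg).2.2 (mem_biUnion hc (Finset.mem_filter.1 hcg).2)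
  have hpair : (C : Set T).PairwiseDisjoint fun c => G.filter (treeLE ρ c) :=
    fun c hc c' hc' hne => Finset.disjoint_filter.2 fun g _ hcg hc'g =>
      (hT.total_of_treeLE hcg hc'g).elim (hC.2 hc hc' hne) (hC.2 hc' hc (Ne.symm hne))
  rw [← hT.sum_atomMass_subtreeAt (ρ := ρ) (m := m) hx, hsplit, Finset.sum_union hdisj,
    Finset.sum_biUnion hpair,
    Finset.sum_congr rfl fun c hc => hT.sum_atomMass_subtreeAt (hCG hc)]
  ring

/-- Compare both sides through the discrete measure `atomMass` on the finite set of all points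
involved. -/
theorem IsRTree.le_sum_of_subtreeAt_subset (hT : IsRTree T) (hm : SumLeOnAntichains ρ m)
    {ι : Type*} {F : Finset ι} {x : ι → T} {C : ι → Finset T}
    (hC : ∀ i ∈ F, IsPreCutset ρ (x i) (C i))
    (hcov : subtreeAt ρ x₀ ⊆ ⋃ i ∈ F, preBall ρ (x i) (C i)) :
    m x₀ ≤ ∑ i ∈ F, (m (x i) - ∑ c ∈ C i, m c) := by
  set G := insert x₀ (F.biUnion fun i => insert (x i) (C i))
  set ν := atomMass ρ m G
  have hν : ∀ g, 0 ≤ ν g := fun g => hm.atomMass_nonneg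
  have hxG : ∀ i ∈ F, x i ∈ G := fun i hi =>
    Finset.mem_insert_of_mem (Finset.mem_biUnion.2 ⟨i, hi, Finset.mem_insert_self _ _⟩)
  have hCG : ∀ i ∈ F, C i ⊆ G := fun i hi c hc =>
    Finset.mem_insert_of_mem (Finset.mem_biUnion.2 ⟨i, hi, Finset.mem_insert_of_mem hc⟩)
  calc m x₀ = ∑ g ∈ G.filter (treeLE ρ x₀), ν g :=
        (hT.sum_atomMass_subtreeAt (Finset.mem_insert_self _ _)).symm
    _ ≤ ∑ g ∈ G.filter (treeLE ρ x₀), ∑ i ∈ F, if g ∈ preBall ρ (x i) (C i) then ν g else 0 := by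
        refine Finset.sum_le_sum fun g hg => ?_
        obtain ⟨i, hi, hgi⟩ := mem_iUnion₂.1 (hcov (Finset.mem_filter.1 hg).2)
        refine le_of_eq_of_le (if_pos hgi).symm (Finset.single_le_sum (f := fun i =>
          if g ∈ preBall ρ (x i) (C i) then ν g else 0) (fun j _ => ?_) hi)
        split_ifs <;> simp [hν]
    _ ≤ ∑ g ∈ G, ∑ i ∈ F, if g ∈ preBall ρ (x i) (C i) then ν g else 0 :=
        Finset.sum_le_sum_of_subset_of_nonneg (Finset.filter_subset _ _) fun g _ _ =>
          Finset.sum_nonneg fun i _ => by split_ifs <;> simp [hν]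
    _ = ∑ i ∈ F, ∑ g ∈ G.filter (· ∈ preBall ρ (x i) (C i)), ν g := by
        rw [Finset.sum_comm]; simp only [Finset.sum_filter]
    _ = ∑ i ∈ F, (m (x i) - ∑ c ∈ C i, m c) :=
        Finset.sum_congr rfl fun i hi => hT.sum_atomMass_preBall (hxG i hi) (hCG i hi) (hC i hi)

end AtomMass

section OuterMeasure

open MeasureTheory
open scoped ENNReal

variable {T : Type*} [MetricSpace T] {ρ x y : T} {m : T → ℝ} {C : Finset T}

/-- `⊤` on sets that are not pre-balls. -/
noncomputable def preBallMass (ρ : T) (m : T → ℝ) (S : Set T) : ℝ≥0∞ :=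
  ⨅ (x : T) (C : Finset T) (_ : IsPreCutset ρ x C) (_ : preBall ρ x C = S),
    ENNReal.ofReal (m x - ∑ c ∈ C, m c)

theorem preBallMass_le (hC : IsPreCutset ρ x C) :
    preBallMass ρ m (preBall ρ x C) ≤ ENNReal.ofReal (m x - ∑ c ∈ C, m c) :=
  iInf_le_of_le x <| iInf_le_of_le C <| iInf_le_of_le hC <| iInf_le _ rfl

theorem preBallMass_empty (ρ : T) (m : T → ℝ) : preBallMass ρ m ∅ = 0 := by
  have h : IsPreCutset ρ ρ {ρ} := ⟨by simp [treeLE_refl], by simp⟩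
  simpa [preBall] using preBallMass_le (m := m) h

open scoped Classical in
theorem preBall_diff_subtreeAt (ρ x y : T) (C : Finset T) :
    preBall ρ x C \ subtreeAt ρ y = preBall ρ x (insert y (C.filter fun c => ¬ treeLE ρ y c)) := by
  ext z
  simp only [preBall, mem_sdiff, mem_iUnion, mem_subtreeAt, Finset.mem_insert,
    Finset.mem_filter, exists_prop]
  constructor
  · rintro ⟨⟨hxz, hz⟩, hyz⟩
    exact ⟨hxz, fun ⟨c, hc, hcz⟩ =>
      hc.elim (fun hcy => hyz (hcy ▸ hcz)) fun hc => hz ⟨c, hc.1, hcz⟩⟩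
  · rintro ⟨hxz, hz⟩
    refine ⟨⟨hxz, fun ⟨c, hc, hcz⟩ => ?_⟩, fun hyz => hz ⟨y, .inl rfl, hyz⟩⟩
    by_cases hyc : treeLE ρ y c
    · exact hz ⟨y, .inl rfl, hyc.trans hcz⟩
    · exact hz ⟨c, .inr ⟨hc, hyc⟩, hcz⟩

open scoped Classical in
theorem IsRTree.preBall_inter_subtreeAt (hT : IsRTree T)
    (hxy : treeLE ρ x y) (hy : ∀ c ∈ C, ¬ treeLE ρ c y) :
    preBall ρ x C ∩ subtreeAt ρ y = preBall ρ y (C.filter (treeLE ρ y)) := by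
  ext z
  simp only [preBall, mem_inter_iff, mem_sdiff, mem_iUnion, mem_subtreeAt,
    Finset.mem_filter, exists_prop]
  constructor
  · rintro ⟨⟨-, hz⟩, hyz⟩
    exact ⟨hyz, fun ⟨c, ⟨hc, _⟩, hcz⟩ => hz ⟨c, hc, hcz⟩⟩
  · rintro ⟨hyz, hz⟩
    refine ⟨⟨hxy.trans hyz, fun ⟨c, hc, hcz⟩ => ?_⟩, hyz⟩
    rcases hT.total_of_treeLE hcz hyz with h | h
    · exact hy c hc h
    · exact hz ⟨c, ⟨hc, h⟩, hcz⟩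

theorem IsRTree.preBall_inter_subtreeAt_eq_empty_or_subset (hT : IsRTree T)
    (h : ¬ (treeLE ρ x y ∧ ∀ c ∈ C, ¬ treeLE ρ c y)) :
    preBall ρ x C ∩ subtreeAt ρ y = ∅ ∨ preBall ρ x C ⊆ subtreeAt ρ y := by
  by_cases hyx : treeLE ρ y x
  · exact .inr fun z hz => hyx.trans hz.1
  refine .inl (eq_empty_of_forall_notMem fun z ⟨⟨hxz, hz⟩, hyz⟩ => ?_)
  rcases hT.total_of_treeLE hxz hyz with hxy | hxy
  · exact h ⟨hxy, fun c hc hcy => hz (mem_biUnion hc (hcy.trans hyz))⟩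
  · exact hyx hxy

/-- Subtrees are Carathéodory measurable for the outer measure generated by `preBallMass`:
intersecting a pre-ball with a subtree splits it into two pre-balls of complementary mass. -/
theorem IsRTree.preBallMass_inter_add_diff_le (hT : IsRTree T) (hm : SumLeOnAntichains ρ m)
    (t : Set T) (y : T) :
    preBallMass ρ m (t ∩ subtreeAt ρ y) + preBallMass ρ m (t \ subtreeAt ρ y) ≤
      preBallMass ρ m t := by
  classical
  refine le_iInf fun x => le_iInf fun C => le_iInf fun hC => le_iInf ?_
  rintro rfl
  by_cases h : treeLE ρ x y ∧ ∀ c ∈ C, ¬ treeLE ρ c y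
  · rw [hT.preBall_inter_subtreeAt h.1 h.2, preBall_diff_subtreeAt]
    have hC₁ := hC.filter y
    have hC₂ := hC.insert_filter_not h.1 fun c hc _ => h.2 c hc
    calc _ ≤ ENNReal.ofReal (m y - ∑ c ∈ C.filter (treeLE ρ y), m c) +
          ENNReal.ofReal (m x - ∑ c ∈ insert y (C.filter fun c => ¬ treeLE ρ y c), m c) :=
          add_le_add (preBallMass_le hC₁) (preBallMass_le hC₂)
      _ = ENNReal.ofReal (m x - ∑ c ∈ C, m c) := by
        rw [← ENNReal.ofReal_add (hm.sub_sum_nonneg hC₁) (hm.sub_sum_nonneg hC₂),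
          Finset.sum_insert (by simp [treeLE_refl]),
          ← Finset.sum_filter_add_sum_filter_not C (treeLE ρ y)]
        ring_nf
  · rcases hT.preBall_inter_subtreeAt_eq_empty_or_subset h with h' | h'
    · rw [h', preBallMass_empty, zero_add, sdiff_eq_left.2 (disjoint_iff_inter_eq_empty.2 h')]
      exact preBallMass_le hC
    · rw [inter_eq_left.2 h', sdiff_eq_empty.2 h', preBallMass_empty, add_zero]
      exact preBallMass_le hC

theorem SumLeOnAntichains.exists_lt_add (hm : SumLeOnAntichains ρ m)
    (hleft : ∀ x, x ≠ ρ → m x = sInf (m '' {y | treeLE ρ y x ∧ y ≠ x})) (hx : x ≠ ρ) {δ : ℝ}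
    (hδ : 0 < δ) : ∃ x', treeLE ρ x' x ∧ x' ≠ x ∧ m x' < m x + δ := by
  have hbdd : BddBelow (m '' {y | treeLE ρ y x ∧ y ≠ x}) :=
    ⟨m x, by rintro _ ⟨y, hy, rfl⟩; exact hm.antitone hy.1⟩
  have hlt : sInf (m '' {y | treeLE ρ y x ∧ y ≠ x}) < m x + δ := by rw [← hleft x hx]; linarith
  obtain ⟨_, ⟨x', hx', rfl⟩, hlt⟩ :=
    (csInf_lt_iff hbdd ⟨m ρ, ρ, ⟨treeLE_root ρ x, Ne.symm hx⟩, rfl⟩).1 hlt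
  exact ⟨x', hx'.1, hx'.2, hlt⟩

/-- Left continuity of `m` lets us enlarge `T_x` to an open set `V ⊆ T_{x'}` at small cost. -/
theorem IsRTree.exists_isOpen_subtreeAt_subset (hT : IsRTree T) (hm : SumLeOnAntichains ρ m)
    (hleft : ∀ x, x ≠ ρ → m x = sInf (m '' {y | treeLE ρ y x ∧ y ≠ x})) (x : T) {δ : ℝ}
    (hδ : 0 < δ) : ∃ x' V, treeLE ρ x' x ∧ m x' < m x + δ ∧ IsOpen V ∧ subtreeAt ρ x ⊆ V ∧
      V ⊆ subtreeAt ρ x' := by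
  by_cases hx : x = ρ
  · subst hx
    exact ⟨x, univ, treeLE_refl x x, by linarith, isOpen_univ, subset_univ _, by
      rw [subtreeAt_root]⟩
  obtain ⟨x', hx'x, hne, hlt⟩ := hm.exists_lt_add hleft hx hδ
  refine ⟨x', subtreeAt ρ x' \ {x'}, hx'x, hlt, isOpen_subtreeAt_diff_singleton hT ρ x',
    fun z hz => ⟨hx'x.trans hz, fun hzx' => hne ?_⟩, sdiff_subset⟩
  exact hx'x.antisymm (mem_singleton_iff.1 hzx' ▸ hz)

theorem IsRTree.exists_isOpen_preBall (hT : IsRTree T) (hm : SumLeOnAntichains ρ m)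
    (hleft : ∀ x, x ≠ ρ → m x = sInf (m '' {y | treeLE ρ y x ∧ y ≠ x})) {t : Set T}
    (ht : preBallMass ρ m t ≠ ⊤) {δ : ℝ} (hδ : 0 < δ) :
    ∃ x C U, IsPreCutset ρ x C ∧ IsOpen U ∧ t ⊆ U ∧ U ⊆ preBall ρ x C ∧
      ENNReal.ofReal (m x - ∑ c ∈ C, m c) ≤ preBallMass ρ m t + ENNReal.ofReal δ := by
  have hδ2 := half_pos hδ
  obtain ⟨x, hlt⟩ := iInf_lt_iff.1
    (ENNReal.lt_add_right ht (ENNReal.ofReal_pos.2 hδ2).ne' :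
      preBallMass ρ m t < preBallMass ρ m t + ENNReal.ofReal (δ / 2))
  obtain ⟨C, hlt⟩ := iInf_lt_iff.1 hlt
  obtain ⟨hC, hlt⟩ := iInf_lt_iff.1 hlt
  obtain ⟨rfl, hlt⟩ := iInf_lt_iff.1 hlt
  obtain ⟨x', V, hx'x, hmx', hV, hxV, hVx'⟩ := hT.exists_isOpen_subtreeAt_subset hm hleft x hδ2
  refine ⟨x', C, V \ ⋃ c ∈ C, subtreeAt ρ c, ⟨fun c hc => hx'x.trans (hC.1 c hc), hC.2⟩,
    hV.sdiff (isClosed_biUnion_finset fun c _ => isClosed_subtreeAt ρ c),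
    sdiff_subset_sdiff_left hxV, sdiff_subset_sdiff_left hVx', ?_⟩
  calc ENNReal.ofReal (m x' - ∑ c ∈ C, m c)
      ≤ ENNReal.ofReal (m x - ∑ c ∈ C, m c + δ / 2) := ENNReal.ofReal_le_ofReal (by linarith)
    _ ≤ ENNReal.ofReal (m x - ∑ c ∈ C, m c) + ENNReal.ofReal (δ / 2) := ENNReal.ofReal_add_le
    _ ≤ preBallMass ρ m (preBall ρ x C) + ENNReal.ofReal (δ / 2) + ENNReal.ofReal (δ / 2) :=
        add_le_add_left hlt.le _
    _ = preBallMass ρ m (preBall ρ x C) + ENNReal.ofReal δ := by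
        rw [add_assoc, ← ENNReal.ofReal_add hδ2.le hδ2.le, add_halves]

/-- The countable subadditivity that makes `m x` the outer measure of `T_x`: compactness reduces
a countable cover by pre-balls to a finite one by slightly larger pre-balls. -/
theorem IsRTree.ofReal_le_tsum_preBallMass [CompactSpace T] (hT : IsRTree T)
    (hm : SumLeOnAntichains ρ m)
    (hleft : ∀ x, x ≠ ρ → m x = sInf (m '' {y | treeLE ρ y x ∧ y ≠ x})) {x₀ : T}
    {t : ℕ → Set T} (hcov : subtreeAt ρ x₀ ⊆ ⋃ n, t n) :
    ENNReal.ofReal (m x₀) ≤ ∑' n, preBallMass ρ m (t n) := by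
  refine ENNReal.le_of_forall_pos_le_add fun ε hε hfin => ?_
  obtain ⟨δ, hδ, hδsum⟩ := ENNReal.exists_pos_sum_of_countable (ENNReal.coe_ne_zero.2 hε.ne') ℕ
  choose x C U hC hU htU hUB hmass using fun n => hT.exists_isOpen_preBall hm hleft
    (ne_top_of_le_ne_top hfin.ne (ENNReal.le_tsum n)) (NNReal.coe_pos.2 (hδ n))
  obtain ⟨F, hF⟩ := (isClosed_subtreeAt ρ x₀).isCompact.elim_finite_subcover U hU
    (hcov.trans (iUnion_mono htU))
  have hreal := hT.le_sum_of_subtreeAt_subset hm (fun n _ => hC n)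
    (hF.trans (iUnion₂_mono fun n _ => hUB n))
  calc ENNReal.ofReal (m x₀) ≤ ∑ n ∈ F, ENNReal.ofReal (m (x n) - ∑ c ∈ C n, m c) := by
        rw [← ENNReal.ofReal_sum_of_nonneg fun n _ => hm.sub_sum_nonneg (hC n)]
        exact ENNReal.ofReal_le_ofReal hreal
    _ ≤ ∑ n ∈ F, (preBallMass ρ m (t n) + δ n) :=
        Finset.sum_le_sum fun n _ => by simpa using hmass n
    _ ≤ ∑' n, preBallMass ρ m (t n) + ε := by
        rw [Finset.sum_add_distrib]
        exact add_le_add (ENNReal.sum_le_tsum F) ((ENNReal.sum_le_tsum F).trans hδsum.le)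

theorem IsRTree.exists_measure_subtreeAt [CompactSpace T] [MeasurableSpace T] [BorelSpace T]
    (hT : IsRTree T) (hm : SumLeOnAntichains ρ m)
    (hleft : ∀ x, x ≠ ρ → m x = sInf (m '' {y | treeLE ρ y x ∧ y ≠ x})) :
    ∃ μ : Measure T, ∀ x, μ (subtreeAt ρ x) = ENNReal.ofReal (m x) := by
  set μ' := OuterMeasure.ofFunction (preBallMass ρ m) (preBallMass_empty ρ m)
  have hle : ‹MeasurableSpace T› ≤ μ'.caratheodory := by
    rw [← generateFrom_range_subtreeAt hT ρ]
    exact MeasurableSpace.generateFrom_le (forall_mem_range.2 fun y =>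
      OuterMeasure.ofFunction_caratheodory fun t => hT.preBallMass_inter_add_diff_le hm t y)
  refine ⟨μ'.toMeasure hle, fun x => ?_⟩
  rw [toMeasure_apply _ _ (isClosed_subtreeAt ρ x).measurableSet]
  refine le_antisymm ((OuterMeasure.ofFunction_le _).trans ?_) ?_
  · simpa [preBall] using preBallMass_le (m := m) (isPreCutset_empty ρ x)
  · rw [OuterMeasure.ofFunction_apply]
    exact le_iInf₂ fun t ht => hT.ofReal_le_tsum_preBallMass hm hleft ht

end OuterMeasure

/-- Proposition 2.4 of the paper: if `m` is a decreasing, left-continuous,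
nonnegative function on a compact rooted `ℝ`-tree with `m(x) ≥ m(x⁺)` for all
`x`, then there is a unique Borel measure `μ` on the tree with
`μ(T_x) = m(x)` for every `x`. -/
theorem stmt15 (T : Type*) [MetricSpace T] [CompactSpace T]
    [MeasurableSpace T] [BorelSpace T]
    (hT : IsRTree T) (ρ : T) (m : T → ℝ)
    (hnonneg : ∀ x, 0 ≤ m x)
    (hdec : ∀ x y, treeLE ρ x y → m y ≤ m x)
    (hleftcont : ∀ x, x ≠ ρ → m x = sInf (m '' {y | treeLE ρ y x ∧ y ≠ x}))
    (hplus : ∀ (x : T) (C : Finset T),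
      (∀ y ∈ C, treeLE ρ x y ∧ y ≠ x) →
      (∀ y ∈ C, ∀ z ∈ C, y ≠ z → dist y z = dist y x + dist x z) →
      ∑ y ∈ C, sSup (m '' {z | treeLE ρ x z ∧ treeLE ρ z y ∧ z ≠ x}) ≤ m x) :
    ∃! μ : MeasureTheory.Measure T,
      ∀ x : T, μ (subtreeAt ρ x) = ENNReal.ofReal (m x) := by
  have hm := sumLeOnAntichains hT hnonneg hdec hplus
  obtain ⟨μ, hμ⟩ := hT.exists_measure_subtreeAt hm hleftcont
  refine ⟨μ, hμ, fun ν hν => ?_⟩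
  have : MeasureTheory.IsFiniteMeasure ν :=
    ⟨by rw [← subtreeAt_root (ρ := ρ), hν]; exact ENNReal.ofReal_lt_top⟩
  exact ext_of_subtreeAt hT ρ fun x => by rw [hν, hμ]
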